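/- Let N ≥ 2 and let p > 1 be real. There exists a constant C > 0, depending only on p, such that for every integer k ≥ 2, every r > 0 and every ȳ″ ∈ ℝ^{N−2}, the regular polygon points x_j satisfy Σ_{j=2}^k |x_1 − x_j|^{−p} ≤ C (k/r)^p. -/

import Mathlib

/-!
The chord from `x_1` to `x_{j+1}` has length `2 r |sin (π j / k)|`, and Jordan's inequality
`sin x ≥ (2/π) min x (π - x)` on `[0, π]` bounds it below by
`4 r min(j, k - j) / k`. Each value of `min(j, k - j)` occurs at most twice,
so the sum is at most `2 ζ(p) (k / (4 r))^p`.
-/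

open Real MeasureTheory Finset

noncomputable section

abbrev E (N : ℕ) := EuclideanSpace ℝ (Fin N)

/-- The standard bubble `w_{x,λ}(y) = (N(N-2))^{(N-2)/4} (λ/(1+λ²|y-x|²))^{(N-2)/2}`. -/
def bubble (N : ℕ) (x : E N) (l : ℝ) (y : E N) : ℝ :=
  ((N : ℝ) * ((N : ℝ) - 2)) ^ (((N : ℝ) - 2) / 4) *
    (l / (1 + l ^ 2 * ‖y - x‖ ^ 2)) ^ (((N : ℝ) - 2) / 2)

/-- The points on the regular `k`-polygon (0-indexed: `pt N k r y2 j` is `x_{j+1}`). -/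
def pt (N k : ℕ) (r : ℝ) (y2 : E (N - 2)) (j : ℕ) : E N :=
  (EuclideanSpace.equiv (Fin N) ℝ).symm fun i =>
    if h0 : (i : ℕ) = 0 then r * Real.cos (2 * Real.pi * j / k)
    else if h1 : (i : ℕ) = 1 then r * Real.sin (2 * Real.pi * j / k)
    else y2 ⟨(i : ℕ) - 2, by have := i.2; omega⟩

/-- `τ = (N-4)/(N-2)`. -/
def tau (N : ℕ) : ℝ := ((N : ℝ) - 4) / ((N : ℝ) - 2)

theorem Real.two_div_pi_mul_min_le_sin {x : ℝ} (hx₀ : 0 ≤ x) (hxπ : x ≤ π) :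
    2 / π * min x (π - x) ≤ sin x := by
  rcases le_total x (π / 2) with hx | hx
  · calc 2 / π * min x (π - x) ≤ 2 / π * x := by gcongr; exact min_le_left _ _
      _ ≤ sin x := mul_le_sin hx₀ hx
  · calc 2 / π * min x (π - x) ≤ 2 / π * (π - x) := by gcongr; exact min_le_right _ _
      _ ≤ sin (π - x) := mul_le_sin (by linarith) (by linarith)
      _ = sin x := sin_pi_sub x

theorem norm_pt_zero_sub_pt (N k : ℕ) (hN : 2 ≤ N) (r : ℝ) (y2 : E (N - 2)) (j : ℕ) :
    ‖pt N k r y2 0 - pt N k r y2 j‖ = 2 * |r| * |sin (π * j / k)| := by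
  obtain ⟨n, rfl⟩ : ∃ n, N = n + 2 := ⟨N - 2, by omega⟩
  rw [← sq_eq_sq₀ (norm_nonneg _) (by positivity), EuclideanSpace.norm_sq_eq,
    Fin.sum_univ_succ, Fin.sum_univ_succ]
  have hangle : 2 * π * j / k = 2 * (π * j / k) := by ring
  simp only [pt, Fin.val_eq_zero_iff, CharP.cast_eq_zero, mul_zero, zero_div, cos_zero, mul_one,
    sin_zero, PiLp.continuousLinearEquiv_symm_apply, hangle, cos_two_mul, sin_two_mul,
    PiLp.sub_apply, ↓reduceDIte, norm_eq_abs, sq_abs, Fin.succ_zero_eq_one, one_ne_zero,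
    Fin.coe_ofNat_eq_mod, Nat.one_mod, zero_sub, norm_neg, norm_mul, mul_pow, Fin.succ_ne_zero,
    Fin.val_succ, Nat.add_eq_right, Nat.add_eq_zero_iff, and_false, Nat.reduceSubDiff, Fin.eta,
    sub_self, norm_zero, ne_eq, OfNat.ofNat_ne_zero, not_false_eq_true, zero_pow, sum_const_zero,
    add_zero]
  linear_combination (4 * r ^ 2 * (cos (π * j / k) ^ 2 - 1)) * sin_sq_add_cos_sq (π * j / k)

theorem mul_min_le_norm_pt_zero_sub_pt (N k : ℕ) (hN : 2 ≤ N) {r : ℝ} (hr : 0 ≤ r)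
    (y2 : E (N - 2)) {j : ℕ} (hjk : j < k) :
    4 * r / k * (min j (k - j) : ℕ) ≤ ‖pt N k r y2 0 - pt N k r y2 j‖ := by
  have hk : (0 : ℝ) < k := by exact_mod_cast (j.zero_le.trans_lt hjk)
  have hx₀ : 0 ≤ π * j / k := by positivity
  have hxπ : π * j / k ≤ π := by rw [div_le_iff₀ hk]; gcongr
  have hmin : 2 / π * min (π * j / k) (π - π * j / k) = 2 / k * (min j (k - j) : ℕ) := by
    rw [Nat.cast_min, Nat.cast_sub hjk.le,
      show π - π * j / k = π * ((k : ℝ) - j) / k by field_simp, mul_div_assoc, mul_div_assoc,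
      ← mul_min_of_nonneg _ _ pi_pos.le, min_div_div_right hk.le]
    field_simp
  calc 4 * r / k * (min j (k - j) : ℕ)
        = 2 * r * (2 / π * min (π * j / k) (π - π * j / k)) := by rw [hmin]; ring
    _ ≤ 2 * r * |sin (π * j / k)| := by
        gcongr; exact (two_div_pi_mul_min_le_sin hx₀ hxπ).trans (le_abs_self _)
    _ = ‖pt N k r y2 0 - pt N k r y2 j‖ := by rw [norm_pt_zero_sub_pt N k hN, abs_of_nonneg hr]

theorem sum_Ico_min_rpow_neg_le {p : ℝ} (hp : 1 < p) (k : ℕ) :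
    ∑ j ∈ Ico 1 k, ((min j (k - j) : ℕ) : ℝ) ^ (-p) ≤
      2 * ∑' n : ℕ, (n : ℝ) ^ (-p) := by
  have hsum : Summable fun n : ℕ => (n : ℝ) ^ (-p) := summable_nat_rpow.mpr (by linarith)
  have hmin (j : ℕ) :
      ((min j (k - j) : ℕ) : ℝ) ^ (-p) ≤ (j : ℝ) ^ (-p) + ((k - j : ℕ) : ℝ) ^ (-p) := by
    rcases le_total j (k - j) with h | h
    · rw [min_eq_left h]; exact le_add_of_nonneg_right (by positivity)
    · rw [min_eq_right h]; exact le_add_of_nonneg_left (by positivity)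
  calc ∑ j ∈ Ico 1 k, ((min j (k - j) : ℕ) : ℝ) ^ (-p)
      ≤ ∑ j ∈ Ico 1 k, ((j : ℝ) ^ (-p) + ((k - j : ℕ) : ℝ) ^ (-p)) :=
        sum_le_sum fun j _ => hmin j
    _ = 2 * ∑ j ∈ Ico 1 k, (j : ℝ) ^ (-p) := by
        rw [sum_add_distrib, sum_Ico_reflect (fun n => (n : ℝ) ^ (-p)) 1 (Nat.le_succ k)]
        simp only [Nat.add_sub_cancel_left, Nat.add_sub_cancel]
        ring
    _ ≤ 2 * ∑' n : ℕ, (n : ℝ) ^ (-p) := by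
        gcongr; exact hsum.sum_le_tsum _ fun n _ => by positivity

/-- Sum of inverse powers of mutual distances of the polygon points. -/
theorem polygon_distance_sum (N : ℕ) (hN : 2 ≤ N) (p : ℝ) (hp : 1 < p) :
    ∃ C : ℝ, 0 < C ∧ ∀ k : ℕ, 2 ≤ k → ∀ r : ℝ, 0 < r → ∀ y2 : E (N - 2),
      (∑ j ∈ Finset.Ico 1 k, ‖pt N k r y2 0 - pt N k r y2 j‖ ^ (-p))
        ≤ C * ((k : ℝ) / r) ^ p := by
  set S := ∑' n : ℕ, (n : ℝ) ^ (-p)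
  have hS : 0 < S := (summable_nat_rpow.mpr (by linarith)).tsum_pos (fun n => by positivity) 1
    (by simp)
  refine ⟨2 * S / 4 ^ p, by positivity, fun k _ r hr y2 => ?_⟩
  calc ∑ j ∈ Ico 1 k, ‖pt N k r y2 0 - pt N k r y2 j‖ ^ (-p)
      ≤ ∑ j ∈ Ico 1 k, (4 * r / k * (min j (k - j) : ℕ)) ^ (-p) := by
        refine sum_le_sum fun j hj => ?_
        obtain ⟨hj₁, hjk⟩ := mem_Ico.mp hj
        have hm : 0 < min j (k - j) := lt_min hj₁ (by omega)
        exact rpow_le_rpow_of_nonpos (by positivity)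
          (mul_min_le_norm_pt_zero_sub_pt N k hN hr.le y2 hjk) (by linarith)
    _ = (k / (4 * r)) ^ p * ∑ j ∈ Ico 1 k, ((min j (k - j) : ℕ) : ℝ) ^ (-p) := by
        rw [mul_sum]
        refine sum_congr rfl fun j _ => ?_
        rw [mul_rpow (by positivity) (by positivity), rpow_neg (by positivity),
          ← inv_rpow (by positivity), inv_div]
    _ ≤ (k / (4 * r)) ^ p * (2 * S) := by gcongr; exact sum_Ico_min_rpow_neg_le hp k
    _ = 2 * S / 4 ^ p * (k / r) ^ p := by
        rw [show (k : ℝ) / (4 * r) = k / r / 4 by ring, div_rpow (by positivity) (by norm_num)]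
        ring

end
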